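/- For every real z, the probit working weight satisfies φ(z)²/(Φ(z)(1−Φ(z))) ≤ c/(1+e^{|z|}) for some absolute constant c > 0, and hence for x_1,…,x_n spanning ℝ^p with full-rank design X, the penalized probit log-likelihood l*(β) = ∑_i[y_i log Φ(⟨x_i,β⟩) + (m_i−y_i) log(1−Φ(⟨x_i,β⟩))] + (1/2) log det(Xᵀ M W(β) X) attains its supremum on ℝ^p and its set of maximizers is bounded, where W(β) has diagonal entries φ(⟨x_i,β⟩)²/(Φ(⟨x_i,β⟩)(1−Φ(⟨x_i,β⟩))), 0 ≤ y_i ≤ m_i, m_i > 0. -/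

import Mathlib

/-!
For `z ≥ 0` we have `Φ(z) ≥ 1/2` and `1 - Φ(z) ≥ φ(z+1)`, while `φ(z)² (1 + e^z) ≤ 2e³ φ(z+1)`;
with the symmetry `w(-z) = w(z)` this gives `w(z) ≤ 4e³ / (1 + e^|z|)`. Hence both `w` and
`w(z) z²` are bounded, so the information `I(β) = Xᵀ M W(β) X` has bounded trace and `βᵀ I(β) β`
is bounded. As `det I ≤ λ_min (tr I)^(p-1)` and `λ_min ‖β‖² ≤ βᵀ I β`, we get
`det I(β) = O(‖β‖⁻²)`, and since the log-likelihood is nonpositive, `l*(β) ≤ C - log ‖β‖`.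
So the continuous function `l*` tends to `-∞` at infinity: it attains its maximum and its
superlevel sets are bounded.
-/

noncomputable def stdNormalPDF (z : ℝ) : ℝ :=
  Real.exp (-z ^ 2 / 2) / Real.sqrt (2 * Real.pi)

noncomputable def stdNormalCDF (z : ℝ) : ℝ :=
  ∫ t in Set.Iic z, stdNormalPDF t

noncomputable def probitWeight (z : ℝ) : ℝ :=
  (stdNormalPDF z) ^ 2 / (stdNormalCDF z * (1 - stdNormalCDF z))

open MeasureTheory Set Filter Matrix Bornology

section NormalDistribution

lemma stdNormalPDF_eq_gaussianPDFReal : stdNormalPDF = ProbabilityTheory.gaussianPDFReal 0 1 := by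
  ext z
  simp [stdNormalPDF, ProbabilityTheory.gaussianPDFReal, div_eq_inv_mul]

lemma stdNormalPDF_pos (z : ℝ) : 0 < stdNormalPDF z := by
  unfold stdNormalPDF
  positivity

lemma stdNormalPDF_neg (z : ℝ) : stdNormalPDF (-z) = stdNormalPDF z := by
  simp [stdNormalPDF]

lemma antitoneOn_stdNormalPDF : AntitoneOn stdNormalPDF (Ici 0) := by
  intro a ha b _ hab
  unfold stdNormalPDF
  gcongr

lemma continuous_stdNormalPDF : Continuous stdNormalPDF := by
  unfold stdNormalPDF
  fun_prop

lemma integrable_stdNormalPDF : Integrable stdNormalPDF := by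
  rw [stdNormalPDF_eq_gaussianPDFReal]
  exact ProbabilityTheory.integrable_gaussianPDFReal 0 1

lemma setIntegral_stdNormalPDF_pos {s : Set ℝ} (hs : 0 < volume s) :
    0 < ∫ t in s, stdNormalPDF t := by
  rw [setIntegral_pos_iff_support_of_nonneg_ae
    (Eventually.of_forall fun t => (stdNormalPDF_pos t).le) integrable_stdNormalPDF.integrableOn,
    (Function.support_eq_univ fun t => (stdNormalPDF_pos t).ne'), univ_inter]
  exact hs

lemma stdNormalCDF_add_integral_Ioi (z : ℝ) :
    stdNormalCDF z + ∫ t in Ioi z, stdNormalPDF t = 1 := by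
  rw [stdNormalCDF, intervalIntegral.integral_Iic_add_Ioi integrable_stdNormalPDF.integrableOn
    integrable_stdNormalPDF.integrableOn, stdNormalPDF_eq_gaussianPDFReal,
    ProbabilityTheory.integral_gaussianPDFReal_eq_one 0 one_ne_zero]

lemma stdNormalCDF_pos (z : ℝ) : 0 < stdNormalCDF z :=
  setIntegral_stdNormalPDF_pos (by simp)

lemma stdNormalCDF_lt_one (z : ℝ) : stdNormalCDF z < 1 := by
  linarith [stdNormalCDF_add_integral_Ioi z, setIntegral_stdNormalPDF_pos (s := Ioi z) (by simp)]

lemma stdNormalCDF_neg (z : ℝ) : stdNormalCDF (-z) = 1 - stdNormalCDF z := by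
  have hreflect : stdNormalCDF (-z) = ∫ t in Ioi z, stdNormalPDF t := by
    rw [stdNormalCDF, ← integral_comp_neg_Ioi]
    simp [stdNormalPDF_neg]
  linarith [stdNormalCDF_add_integral_Ioi z]

lemma stdNormalCDF_zero : stdNormalCDF 0 = 1 / 2 := by
  linarith [neg_zero (G := ℝ) ▸ stdNormalCDF_neg 0]

lemma monotone_stdNormalCDF : Monotone stdNormalCDF := fun _ _ hab =>
  setIntegral_mono_set integrable_stdNormalPDF.integrableOn
    (Eventually.of_forall fun t => (stdNormalPDF_pos t).le) (Iic_subset_Iic.2 hab).eventuallyLE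

@[fun_prop]
lemma continuous_stdNormalCDF : Continuous stdNormalCDF := by
  have h : stdNormalCDF = fun z => (∫ t in (0 : ℝ)..z, stdNormalPDF t) + stdNormalCDF 0 := by
    ext z
    rw [← intervalIntegral.integral_Iic_sub_Iic integrable_stdNormalPDF.integrableOn
      integrable_stdNormalPDF.integrableOn, stdNormalCDF, stdNormalCDF, sub_add_cancel]
  rw [h]
  exact (intervalIntegral.continuous_primitive
    (fun _ _ => integrable_stdNormalPDF.intervalIntegrable) 0).add continuous_const

/-- The tail mass beyond `z` is at least the mass of `(z, z + 1]`, where the density is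
`≥ φ(z+1)`. -/
lemma stdNormalPDF_add_one_le_one_sub_stdNormalCDF {z : ℝ} (hz : 0 ≤ z) :
    stdNormalPDF (z + 1) ≤ 1 - stdNormalCDF z := by
  have hbox : stdNormalPDF (z + 1) * volume.real (Ioc z (z + 1))
      ≤ ∫ t in Ioc z (z + 1), stdNormalPDF t :=
    setIntegral_ge_of_const_le_real measurableSet_Ioc (by simp)
      (fun t ht => antitoneOn_stdNormalPDF (hz.trans ht.1.le) (hz.trans (by linarith)) ht.2)
      integrable_stdNormalPDF.integrableOn
  have htail : ∫ t in Ioc z (z + 1), stdNormalPDF t ≤ ∫ t in Ioi z, stdNormalPDF t :=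
    setIntegral_mono_set integrable_stdNormalPDF.integrableOn
      (Eventually.of_forall fun t => (stdNormalPDF_pos t).le) Ioc_subset_Ioi_self.eventuallyLE
  simp only [Real.volume_real_Ioc, add_sub_cancel_left, max_eq_left zero_le_one, mul_one] at hbox
  linarith [stdNormalCDF_add_integral_Ioi z]

end NormalDistribution

section ProbitWeight

open Real

lemma stdNormalCDF_mul_one_sub_pos (z : ℝ) : 0 < stdNormalCDF z * (1 - stdNormalCDF z) :=
  mul_pos (stdNormalCDF_pos z) (sub_pos.2 (stdNormalCDF_lt_one z))

lemma probitWeight_pos (z : ℝ) : 0 < probitWeight z :=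
  div_pos (pow_pos (stdNormalPDF_pos z) 2) (stdNormalCDF_mul_one_sub_pos z)

lemma probitWeight_neg (z : ℝ) : probitWeight (-z) = probitWeight z := by
  rw [probitWeight, probitWeight, stdNormalPDF_neg, stdNormalCDF_neg, sub_sub_cancel, mul_comm]

@[fun_prop]
lemma continuous_probitWeight : Continuous probitWeight :=
  (continuous_stdNormalPDF.pow 2).div
    (continuous_stdNormalCDF.mul (continuous_const.sub continuous_stdNormalCDF))
    fun z => (stdNormalCDF_mul_one_sub_pos z).ne'

/-- Both `exp (-z²)` and `exp (-z² + z)` exceed `exp (-(z+1)²/2)` by a factor at most `exp 3`,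
since the exponents differ by `1 - (z-1)²/2` and `5/2 - (z-2)²/2`. -/
lemma stdNormalPDF_sq_mul_one_add_exp_le (z : ℝ) :
    stdNormalPDF z ^ 2 * (1 + exp z) ≤ 2 * exp 3 * stdNormalPDF (z + 1) := by
  have hs : 1 ≤ √(2 * π) := one_le_sqrt.2 (by linarith [pi_gt_three])
  have hexp : exp (-z ^ 2 / 2) ^ 2 * (1 + exp z) ≤ 2 * exp 3 * exp (-(z + 1) ^ 2 / 2) := by
    have h₁ : exp (-z ^ 2 / 2 + -z ^ 2 / 2) ≤ exp 3 * exp (-(z + 1) ^ 2 / 2) := by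
      rw [← exp_add, exp_le_exp]; nlinarith [sq_nonneg (z - 1)]
    have h₂ : exp (-z ^ 2 / 2 + -z ^ 2 / 2 + z) ≤ exp 3 * exp (-(z + 1) ^ 2 / 2) := by
      rw [← exp_add, exp_le_exp]; nlinarith [sq_nonneg (z - 2)]
    rw [sq, ← exp_add, mul_add, mul_one, ← exp_add]
    linarith
  calc stdNormalPDF z ^ 2 * (1 + exp z) = exp (-z ^ 2 / 2) ^ 2 * (1 + exp z) / √(2 * π) ^ 2 := by
        rw [stdNormalPDF]; ring
    _ ≤ 2 * exp 3 * exp (-(z + 1) ^ 2 / 2) / √(2 * π) ^ 2 := by gcongr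
    _ ≤ 2 * exp 3 * exp (-(z + 1) ^ 2 / 2) / √(2 * π) :=
        div_le_div_of_nonneg_left (by positivity) (by positivity) (le_self_pow₀ hs two_ne_zero)
    _ = 2 * exp 3 * stdNormalPDF (z + 1) := by rw [stdNormalPDF]; ring

lemma probitWeight_mul_one_add_exp_le_of_nonneg {z : ℝ} (hz : 0 ≤ z) :
    probitWeight z * (1 + exp z) ≤ 4 * exp 3 := by
  have hφ := stdNormalPDF_pos (z + 1)
  have hhalf : 1 / 2 ≤ stdNormalCDF z := stdNormalCDF_zero ▸ monotone_stdNormalCDF hz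
  have htail := stdNormalPDF_add_one_le_one_sub_stdNormalCDF hz
  have hden : stdNormalPDF (z + 1) / 2 ≤ stdNormalCDF z * (1 - stdNormalCDF z) := by
    nlinarith
  calc probitWeight z * (1 + exp z)
      = stdNormalPDF z ^ 2 * (1 + exp z) / (stdNormalCDF z * (1 - stdNormalCDF z)) := by
        rw [probitWeight, div_mul_eq_mul_div]
    _ ≤ 2 * exp 3 * stdNormalPDF (z + 1) / (stdNormalPDF (z + 1) / 2) :=
        div_le_div₀ (by positivity) (stdNormalPDF_sq_mul_one_add_exp_le z) (by positivity) hden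
    _ = 4 * exp 3 := by field_simp; ring

lemma probitWeight_le (z : ℝ) : probitWeight z ≤ 4 * exp 3 / (1 + exp |z|) := by
  rw [le_div_iff₀ (by positivity)]
  rcases le_or_gt 0 z with hz | hz
  · rw [abs_of_nonneg hz]
    exact probitWeight_mul_one_add_exp_le_of_nonneg hz
  · rw [abs_of_neg hz, ← probitWeight_neg]
    exact probitWeight_mul_one_add_exp_le_of_nonneg (neg_nonneg.2 hz.le)

lemma probitWeight_le_const (z : ℝ) : probitWeight z ≤ 4 * exp 3 :=
  (probitWeight_le z).trans (div_le_self (by positivity) (by linarith [exp_pos |z|]))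

lemma sq_le_four_mul_one_add_exp_abs (z : ℝ) : z ^ 2 ≤ 4 * (1 + exp |z|) := by
  have h : 1 + |z| / 2 ≤ exp (|z| / 2) := by linarith [add_one_le_exp (|z| / 2)]
  have hsq : exp (|z| / 2) ^ 2 = exp |z| := by rw [← exp_nat_mul]; ring_nf
  nlinarith [sq_abs z, abs_nonneg z]

lemma probitWeight_mul_sq_le (z : ℝ) : probitWeight z * z ^ 2 ≤ 16 * exp 3 := by
  calc probitWeight z * z ^ 2 ≤ 4 * exp 3 / (1 + exp |z|) * (4 * (1 + exp |z|)) :=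
        mul_le_mul (probitWeight_le z) (sq_le_four_mul_one_add_exp_abs z) (sq_nonneg z)
          (by positivity)
    _ = 16 * exp 3 := by field_simp; ring

end ProbitWeight

namespace Matrix

variable {ι κ : Type*} [Fintype ι] [Fintype κ]

section Gram

variable [DecidableEq ι]

lemma dotProduct_transpose_mul_diagonal_mul_mulVec (X : Matrix ι κ ℝ) (d : ι → ℝ)
    (v : κ → ℝ) : v ⬝ᵥ ((Xᵀ * diagonal d * X) *ᵥ v) = ∑ i, d i * (X *ᵥ v) i ^ 2 := by
  rw [← mulVec_mulVec, ← mulVec_mulVec, dotProduct_mulVec, vecMul_transpose, dotProduct]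
  simp only [mulVec_diagonal]
  exact Finset.sum_congr rfl fun i _ => by ring

lemma trace_transpose_mul_diagonal_mul (X : Matrix ι κ ℝ) (d : ι → ℝ) :
    (Xᵀ * diagonal d * X).trace = ∑ i, d i * ∑ j, X i j ^ 2 := by
  rw [trace_mul_comm, ← Matrix.mul_assoc, trace]
  simp only [diag, mul_diagonal]
  simp only [mul_apply, transpose_apply, Finset.sum_mul, Finset.mul_sum]
  exact Finset.sum_congr rfl fun i _ => Finset.sum_congr rfl fun j _ => by ring

end Gram

variable [DecidableEq κ]

lemma IsHermitian.posSemidef_sub_smul_one {A : Matrix κ κ ℝ} (hA : A.IsHermitian) {c : ℝ}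
    (hc : ∀ k, c ≤ hA.eigenvalues k) : (A - c • 1).PosSemidef := by
  have hshift : A - c • 1 = Unitary.conjStarAlgAut ℝ _ hA.eigenvectorUnitary
      (diagonal fun k => hA.eigenvalues k - c) := by
    rw [← diagonal_sub hA.eigenvalues fun _ => c, map_sub, ← smul_one_eq_diagonal, map_smul,
      map_one]
    conv_lhs => rw [hA.spectral_theorem]
    rfl
  rw [hshift, Unitary.conjStarAlgAut_apply]
  simpa only [star_eq_conjTranspose, conjTranspose_conjTranspose] using
    (PosSemidef.diagonal fun k => sub_nonneg.2 (hc k)).conjTranspose_mul_mul_same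
      (star (hA.eigenvectorUnitary : Matrix κ κ ℝ))

lemma IsHermitian.mul_dotProduct_self_le {A : Matrix κ κ ℝ} (hA : A.IsHermitian) {c : ℝ}
    (hc : ∀ k, c ≤ hA.eigenvalues k) (v : κ → ℝ) : c * (v ⬝ᵥ v) ≤ v ⬝ᵥ (A *ᵥ v) := by
  have h := (hA.posSemidef_sub_smul_one hc).dotProduct_mulVec_nonneg v
  rw [sub_mulVec, smul_mulVec, one_mulVec, dotProduct_sub, dotProduct_smul, star_trivial,
    smul_eq_mul] at h
  linarith

lemma PosSemidef.eigenvalues_le_trace {A : Matrix κ κ ℝ} (hA : A.PosSemidef) (k : κ) :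
    hA.1.eigenvalues k ≤ A.trace := by
  rw [hA.1.trace_eq_sum_eigenvalues]
  exact Finset.single_le_sum (fun i _ => hA.eigenvalues_nonneg i) (Finset.mem_univ k)

lemma PosSemidef.det_le_eigenvalues_mul_trace_pow {A : Matrix κ κ ℝ} (hA : A.PosSemidef)
    (k : κ) : A.det ≤ hA.1.eigenvalues k * A.trace ^ (Fintype.card κ - 1) := by
  rw [hA.1.det_eq_prod_eigenvalues, ← Finset.mul_prod_erase _ _ (Finset.mem_univ k)]
  refine mul_le_mul_of_nonneg_left ?_ (hA.eigenvalues_nonneg k)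
  calc ∏ i ∈ Finset.univ.erase k, hA.1.eigenvalues i
      ≤ ∏ _i ∈ Finset.univ.erase k, A.trace :=
        Finset.prod_le_prod (fun i _ => hA.eigenvalues_nonneg i)
          fun i _ => hA.eigenvalues_le_trace i
    _ = A.trace ^ (Fintype.card κ - 1) := by
        rw [Finset.prod_const, Finset.card_erase_of_mem (Finset.mem_univ k), Finset.card_univ]

theorem PosSemidef.det_mul_dotProduct_self_le {A : Matrix κ κ ℝ} (hA : A.PosSemidef)
    (v : κ → ℝ) : A.det * (v ⬝ᵥ v) ≤ A.trace ^ (Fintype.card κ - 1) * (v ⬝ᵥ (A *ᵥ v)) := by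
  cases isEmpty_or_nonempty κ
  · simp [dotProduct]
  obtain ⟨k, hk⟩ := Finite.exists_min hA.1.eigenvalues
  have htrace : 0 ≤ A.trace := (hA.eigenvalues_nonneg k).trans (hA.eigenvalues_le_trace k)
  calc A.det * (v ⬝ᵥ v)
      ≤ hA.1.eigenvalues k * A.trace ^ (Fintype.card κ - 1) * (v ⬝ᵥ v) :=
        mul_le_mul_of_nonneg_right (hA.det_le_eigenvalues_mul_trace_pow k)
          (dotProduct_self_star_nonneg v)
    _ = A.trace ^ (Fintype.card κ - 1) * (hA.1.eigenvalues k * (v ⬝ᵥ v)) := by ring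
    _ ≤ A.trace ^ (Fintype.card κ - 1) * (v ⬝ᵥ (A *ᵥ v)) :=
        mul_le_mul_of_nonneg_left (hA.1.mul_dotProduct_self_le hk v) (by positivity)

end Matrix

lemma isBounded_setOf_le_of_tendsto_cobounded_atBot {α : Type*} [Bornology α] {f : α → ℝ}
    (hf : Tendsto f (cobounded α) atBot) (c : ℝ) : IsBounded {x | c ≤ f x} := by
  rw [isBounded_def]
  filter_upwards [hf.eventually (eventually_lt_atBot c)] with x hx using not_le.2 hx

lemma tendsto_log_cobounded_atBot_of_mul_norm_sq_le {E : Type*} [SeminormedAddCommGroup E]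
    {g : E → ℝ} (hg : ∀ x, 0 < g x) {Q : ℝ} (hQ : ∀ x, g x * ‖x‖ ^ 2 ≤ Q) :
    Tendsto (fun x => Real.log (g x)) (cobounded E) atBot := by
  have hlog_norm : Tendsto (fun x : E => Real.log ‖x‖) (cobounded E) atTop :=
    Real.tendsto_log_atTop.comp tendsto_norm_cobounded_atTop
  have hbound : Tendsto (fun x : E => Real.log (max Q 1) - 2 * Real.log ‖x‖) (cobounded E) atBot :=
    tendsto_atBot_add_const_left _ _
      (tendsto_neg_atTop_atBot.comp (hlog_norm.const_mul_atTop two_pos))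
  refine tendsto_atBot_mono' _ ?_ hbound
  filter_upwards [eventually_cobounded_le_norm 1] with x hx
  have hx₀ : 0 < ‖x‖ := one_pos.trans_le hx
  have hlog : Real.log (g x * ‖x‖ ^ 2) ≤ Real.log (max Q 1) :=
    Real.log_le_log (mul_pos (hg x) (by positivity)) ((hQ x).trans (le_max_left Q 1))
  rw [Real.log_mul (hg x).ne' (by positivity), Real.log_pow] at hlog
  push_cast at hlog
  linarith

lemma mul_log_add_mul_log_one_sub_nonpos {y m q : ℝ} (hy : 0 ≤ y) (hym : y ≤ m) (hq₀ : 0 ≤ q)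
    (hq₁ : q ≤ 1) : y * Real.log q + (m - y) * Real.log (1 - q) ≤ 0 :=
  add_nonpos (mul_nonpos_of_nonneg_of_nonpos hy (Real.log_nonpos hq₀ hq₁))
    (mul_nonpos_of_nonneg_of_nonpos (sub_nonneg.2 hym)
      (Real.log_nonpos (sub_nonneg.2 hq₁) (sub_le_self 1 hq₀)))

section ProbitFisherInfo

variable {ι κ : Type*} [Fintype ι] [Fintype κ] [DecidableEq ι]

/-- The Fisher information `Xᵀ M W(β) X` of the binomial probit model with trial counts `m`. -/
noncomputable def probitFisherInfo (X : Matrix ι κ ℝ) (m : ι → ℝ) (β : κ → ℝ) : Matrix κ κ ℝ :=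
  Xᵀ * diagonal (fun i => m i * probitWeight ((X *ᵥ β) i)) * X

lemma posDef_probitFisherInfo {X : Matrix ι κ ℝ} (hX : Function.Injective X.mulVec)
    {m : ι → ℝ} (hm : ∀ i, 0 < m i) (β : κ → ℝ) : (probitFisherInfo X m β).PosDef := by
  rw [probitFisherInfo, ← conjTranspose_eq_transpose_of_trivial]
  exact (PosDef.diagonal fun i =>
    mul_pos (hm i) (probitWeight_pos _)).conjTranspose_mul_mul_same hX

@[fun_prop]
lemma continuous_probitFisherInfo (X : Matrix ι κ ℝ) (m : ι → ℝ) :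
    Continuous (probitFisherInfo X m) := by
  unfold probitFisherInfo
  fun_prop

variable [DecidableEq κ]

lemma det_probitFisherInfo_mul_dotProduct_self_le (X : Matrix ι κ ℝ) {m : ι → ℝ}
    (hm : ∀ i, 0 ≤ m i) (β : κ → ℝ) :
    (probitFisherInfo X m β).det * (β ⬝ᵥ β) ≤
      (4 * Real.exp 3 * ∑ i, m i * ∑ j, X i j ^ 2) ^ (Fintype.card κ - 1) *
        (16 * Real.exp 3 * ∑ i, m i) := by
  have hpsd : (probitFisherInfo X m β).PosSemidef := by
    rw [probitFisherInfo, ← conjTranspose_eq_transpose_of_trivial]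
    exact (PosSemidef.diagonal fun i =>
      mul_nonneg (hm i) (probitWeight_pos _).le).conjTranspose_mul_mul_same X
  have htrace : (probitFisherInfo X m β).trace ≤ 4 * Real.exp 3 * ∑ i, m i * ∑ j, X i j ^ 2 := by
    rw [probitFisherInfo, trace_transpose_mul_diagonal_mul, Finset.mul_sum]
    refine Finset.sum_le_sum fun i _ => ?_
    have := mul_le_mul_of_nonneg_left (probitWeight_le_const ((X *ᵥ β) i)) (hm i)
    have hrow : 0 ≤ ∑ j, X i j ^ 2 := by positivity
    nlinarith
  have hquad : β ⬝ᵥ (probitFisherInfo X m β *ᵥ β) ≤ 16 * Real.exp 3 * ∑ i, m i := by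
    rw [probitFisherInfo, dotProduct_transpose_mul_diagonal_mul_mulVec, Finset.mul_sum]
    refine Finset.sum_le_sum fun i _ => ?_
    have := mul_le_mul_of_nonneg_left (probitWeight_mul_sq_le ((X *ᵥ β) i)) (hm i)
    linarith
  exact (hpsd.det_mul_dotProduct_self_le β).trans (mul_le_mul
    (pow_le_pow_left₀ hpsd.trace_nonneg htrace _) hquad (hpsd.dotProduct_mulVec_nonneg β)
    (pow_nonneg (hpsd.trace_nonneg.trans htrace) _))

end ProbitFisherInfo

theorem stmt_18_general (n p : ℕ) (X : Matrix (Fin n) (Fin p) ℝ)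
    (hX : LinearIndependent ℝ (fun j : Fin p => (fun i => X i j : Fin n → ℝ)))
    (m y : Fin n → ℝ) (hm : ∀ i, 0 < m i) (hy : ∀ i, 0 ≤ y i ∧ y i ≤ m i)
    (W : EuclideanSpace ℝ (Fin p) → Matrix (Fin n) (Fin n) ℝ)
    (hW : ∀ β, W β = Matrix.diagonal (fun i => probitWeight (∑ j, X i j * β j)))
    (lstar : EuclideanSpace ℝ (Fin p) → ℝ)
    (hl : ∀ β, lstar β =
      (∑ i, (y i * Real.log (stdNormalCDF (∑ j, X i j * β j)) +
        (m i - y i) * Real.log (1 - stdNormalCDF (∑ j, X i j * β j)))) +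
        (1 / 2) * Real.log (X.transpose * Matrix.diagonal m * W β * X).det) :
    (∃ c > (0 : ℝ), ∀ z : ℝ, probitWeight z ≤ c / (1 + Real.exp |z|)) ∧
    (∃ b : EuclideanSpace ℝ (Fin p), ∀ β, lstar β ≤ lstar b) ∧
      Bornology.IsBounded {β : EuclideanSpace ℝ (Fin p) | ∀ β', lstar β' ≤ lstar β} := by
  have hlstar : lstar = fun β : EuclideanSpace ℝ (Fin p) =>
      (∑ i, (y i * Real.log (stdNormalCDF ((X *ᵥ β.ofLp) i)) +
        (m i - y i) * Real.log (1 - stdNormalCDF ((X *ᵥ β.ofLp) i)))) +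
        (1 / 2) * Real.log (probitFisherInfo X m β.ofLp).det := by
    ext β
    rw [hl, hW, Matrix.mul_assoc Xᵀ, diagonal_mul_diagonal]
    rfl
  have hcont : Continuous lstar := by
    rw [hlstar]
    fun_prop (disch := intro β; first
      | exact (stdNormalCDF_pos _).ne'
      | exact (sub_pos.2 (stdNormalCDF_lt_one _)).ne'
      | exact (posDef_probitFisherInfo (mulVec_injective_iff.2 hX) hm _).det_pos.ne')
  have hdet : Tendsto
      (fun β : EuclideanSpace ℝ (Fin p) => Real.log (probitFisherInfo X m β.ofLp).det)
      (cobounded _) atBot := by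
    exact tendsto_log_cobounded_atBot_of_mul_norm_sq_le
      (fun β => (posDef_probitFisherInfo (mulVec_injective_iff.2 hX) hm _).det_pos) fun β => by
        rw [EuclideanSpace.real_norm_sq_eq]
        simpa only [dotProduct, sq] using
          det_probitFisherInfo_mul_dotProduct_self_le X (fun i => (hm i).le) β.ofLp
  have htend : Tendsto lstar (cobounded _) atBot := by
    refine tendsto_atBot_mono (fun β => ?_) (hdet.const_mul_atBot one_half_pos)
    rw [hlstar]
    have hlik := Finset.sum_nonpos fun i (_ : i ∈ Finset.univ) =>
      mul_log_add_mul_log_one_sub_nonpos (hy i).1 (hy i).2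
        (stdNormalCDF_pos ((X *ᵥ β.ofLp) i)).le (stdNormalCDF_lt_one _).le
    linarith
  obtain ⟨b, hb⟩ := hcont.exists_forall_ge
    (Metric.cobounded_eq_cocompact (α := EuclideanSpace ℝ (Fin p)) ▸ htend)
  exact ⟨⟨4 * Real.exp 3, by positivity, probitWeight_le⟩, ⟨b, hb⟩,
    (isBounded_setOf_le_of_tendsto_cobounded_atBot htend (lstar b)).subset fun β hβ => hβ b⟩

theorem stmt_18 (n p : ℕ) (X : Matrix (Fin n) (Fin p) ℝ) (hnp : p ≤ n)
    (hX : LinearIndependent ℝ (fun j : Fin p => (fun i => X i j : Fin n → ℝ)))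
    (m y : Fin n → ℝ) (hm : ∀ i, 0 < m i) (hy : ∀ i, 0 ≤ y i ∧ y i ≤ m i)
    (W : EuclideanSpace ℝ (Fin p) → Matrix (Fin n) (Fin n) ℝ)
    (hW : ∀ β, W β = Matrix.diagonal (fun i => probitWeight (∑ j, X i j * β j)))
    (lstar : EuclideanSpace ℝ (Fin p) → ℝ)
    (hl : ∀ β, lstar β =
      (∑ i, (y i * Real.log (stdNormalCDF (∑ j, X i j * β j)) +
        (m i - y i) * Real.log (1 - stdNormalCDF (∑ j, X i j * β j)))) +
        (1 / 2) * Real.log (X.transpose * Matrix.diagonal m * W β * X).det) :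
    (∃ c > (0 : ℝ), ∀ z : ℝ, probitWeight z ≤ c / (1 + Real.exp |z|)) ∧
    (∃ b : EuclideanSpace ℝ (Fin p), ∀ β, lstar β ≤ lstar b) ∧
      Bornology.IsBounded {β : EuclideanSpace ℝ (Fin p) | ∀ β', lstar β' ≤ lstar β} :=
  stmt_18_general n p X hX m y hm hy W hW lstar hl
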